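/- Suppose the system is (2r,2s)-sparse strongly observable, at most r inputs are attacked (with attacked set Γ_u* ) and at most s outputs are attacked (attack-free set Γ_y*). Let Γ_u with |Γ_u| ≤ r and Γ_y with |Γ_y| ≥ p−s be candidate sets. If there exist x̂ ∈ ℝⁿ and Û such that the batch output over Γ_y equals O_{Γ_y} x̂ + N_{Γ_u→Γ_y} Û (where the true trajectory is generated with zero nominal input, initial state x(t−n+1), and attack inputs supported on Γ_u*), then x̂ = x(t−n+1). -/

import Mathlib

open Matrix

/-- State sequence of the discrete-time LTI system x(t+1)=Ax(t)+Bu(t). -/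
def stSeq {n m : ℕ} (A : Matrix (Fin n) (Fin n) ℝ) (B : Matrix (Fin n) (Fin m) ℝ)
    (x0 : Fin n → ℝ) (u : ℕ → Fin m → ℝ) : ℕ → Fin n → ℝ
  | 0 => x0
  | t + 1 => A.mulVec (stSeq A B x0 u t) + B.mulVec (u t)

/-- Output sequence y(t)=Cx(t)+Du(t). -/
def outSeq {n m p : ℕ} (A : Matrix (Fin n) (Fin n) ℝ) (B : Matrix (Fin n) (Fin m) ℝ)
    (C : Matrix (Fin p) (Fin n) ℝ) (D : Matrix (Fin p) (Fin m) ℝ)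
    (x0 : Fin n → ℝ) (u : ℕ → Fin m → ℝ) (t : ℕ) : Fin p → ℝ :=
  C.mulVec (stSeq A B x0 u t) + D.mulVec (u t)

/-- Strong observability (batch form over a window of length `n`, the system order) of the
subsystem with unknown inputs `Γu` and retained outputs `Γy`: zero output on `Γy` over the
window, for inputs supported on `Γu`, forces a zero initial state. Equivalently, the batch
relation `Y|Γy = O_{Γy} x + N_{Γu→Γy} U` uniquely determines `x`. -/
def SubStrongObsW {n m p : ℕ} (A : Matrix (Fin n) (Fin n) ℝ) (B : Matrix (Fin n) (Fin m) ℝ)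
    (C : Matrix (Fin p) (Fin n) ℝ) (D : Matrix (Fin p) (Fin m) ℝ)
    (Γu : Finset (Fin m)) (Γy : Finset (Fin p)) : Prop :=
  ∀ (x0 : Fin n → ℝ) (u : ℕ → Fin m → ℝ),
    (∀ (t : ℕ) (i : Fin m), i ∉ Γu → u t i = 0) →
    (∀ k : ℕ, k < n → ∀ j ∈ Γy, outSeq A B C D x0 u k j = 0) → x0 = 0

/-- `(r,s)`-sparse strong observability (batch form): every subsystem with at most `r`
unknown inputs and at least `p - s` retained outputs is strongly observable. -/
def SparseStrongObsW {n m p : ℕ} (A : Matrix (Fin n) (Fin n) ℝ) (B : Matrix (Fin n) (Fin m) ℝ)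
    (C : Matrix (Fin p) (Fin n) ℝ) (D : Matrix (Fin p) (Fin m) ℝ) (r s : ℕ) : Prop :=
  ∀ (Γu : Finset (Fin m)) (Γy : Finset (Fin p)),
    Γu.card ≤ r → p - s ≤ Γy.card → SubStrongObsW A B C D Γu Γy

/-! The candidate `(x̂, Û)` and the true `(x⋆, w)` produce the same outputs on the attack-free
rows of `Γy`, so by linearity their difference has zero output on `Γy ∩ Γy*` (at least `p - 2s`
rows) under inputs supported on `Γu ∪ Γu*` (at most `2r` inputs). Strong observability of that
subsystem, granted by `(2r,2s)`-sparse strong observability, forces `x̂ - x⋆ = 0`. -/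

section Linearity

variable {n m p : ℕ} (A : Matrix (Fin n) (Fin n) ℝ) (B : Matrix (Fin n) (Fin m) ℝ)
  (C : Matrix (Fin p) (Fin n) ℝ) (D : Matrix (Fin p) (Fin m) ℝ)

lemma stSeq_sub (x0 x0' : Fin n → ℝ) (u u' : ℕ → Fin m → ℝ) (t : ℕ) :
    stSeq A B (x0 - x0') (u - u') t = stSeq A B x0 u t - stSeq A B x0' u' t := by
  induction t with
  | zero => rfl
  | succ t ih =>
    simp only [stSeq, ih, Pi.sub_apply, Matrix.mulVec_sub]
    abel

lemma outSeq_sub (x0 x0' : Fin n → ℝ) (u u' : ℕ → Fin m → ℝ) (t : ℕ) :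
    outSeq A B C D (x0 - x0') (u - u') t = outSeq A B C D x0 u t - outSeq A B C D x0' u' t := by
  simp only [outSeq, stSeq_sub, Pi.sub_apply, Matrix.mulVec_sub]
  abel

end Linearity

lemma SubStrongObsW.eq_of_outSeq_eq {n m p : ℕ} {A : Matrix (Fin n) (Fin n) ℝ}
    {B : Matrix (Fin n) (Fin m) ℝ} {C : Matrix (Fin p) (Fin n) ℝ} {D : Matrix (Fin p) (Fin m) ℝ}
    {Γu : Finset (Fin m)} {Γy : Finset (Fin p)} (h : SubStrongObsW A B C D Γu Γy)
    {x x' : Fin n → ℝ} {u u' : ℕ → Fin m → ℝ} (hu : ∀ t, ∀ i ∉ Γu, u t i = u' t i)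
    (hy : ∀ k < n, ∀ j ∈ Γy, outSeq A B C D x u k j = outSeq A B C D x' u' k j) :
    x = x' := by
  refine sub_eq_zero.mp (h (x - x') (u - u') (fun t i hi => ?_) (fun k hk j hj => ?_))
  · simp [hu t i hi]
  · simp [outSeq_sub, hy k hk j hj]

lemma Finset.card_sub_add_le_card_inter {α : Type*} [Fintype α] [DecidableEq α]
    {s t : Finset α} {a b : ℕ} (hs : Fintype.card α - a ≤ s.card)
    (ht : Fintype.card α - b ≤ t.card) : Fintype.card α - (a + b) ≤ (s ∩ t).card := by
  have := card_union_add_card_inter s t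
  have := (s ∪ t).card_le_univ
  omega

/-- Proposition 1: under (2r,2s)-sparse strong observability, with true attack
input supported on Γu* (|Γu*| ≤ r), attack-free output set Γy* (|Γy*| ≥ p−s), zero nominal
input and true initial state x⋆, if candidate sets Γu (|Γu| ≤ r), Γy (|Γy| ≥ p−s) admit x̂
and an input batch Û supported on Γu that exactly explain the observed batch output on Γy,
then x̂ equals the true state x⋆. -/
theorem consistency_test_correct {n m p : ℕ}
    (A : Matrix (Fin n) (Fin n) ℝ) (B : Matrix (Fin n) (Fin m) ℝ)
    (C : Matrix (Fin p) (Fin n) ℝ) (D : Matrix (Fin p) (Fin m) ℝ) (r s : ℕ)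
    (hso : SparseStrongObsW A B C D (2 * r) (2 * s))
    (Γustar : Finset (Fin m)) (hΓustar : Γustar.card ≤ r)
    (Γystar : Finset (Fin p)) (hΓystar : p - s ≤ Γystar.card)
    (xstar : Fin n → ℝ) (w : ℕ → Fin m → ℝ)
    (hw : ∀ (t : ℕ) (i : Fin m), i ∉ Γustar → w t i = 0)
    (a : ℕ → Fin p → ℝ) (ha : ∀ (t : ℕ), ∀ j ∈ Γystar, a t j = 0)
    (Y : ℕ → Fin p → ℝ) (hY : ∀ t : ℕ, Y t = outSeq A B C D xstar w t + a t)
    (Γu : Finset (Fin m)) (hΓu : Γu.card ≤ r)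
    (Γy : Finset (Fin p)) (hΓy : p - s ≤ Γy.card)
    (xhat : Fin n → ℝ) (Uhat : ℕ → Fin m → ℝ)
    (hUhat : ∀ (t : ℕ) (i : Fin m), i ∉ Γu → Uhat t i = 0)
    (hmatch : ∀ k : ℕ, k < n → ∀ j ∈ Γy, Y k j = outSeq A B C D xhat Uhat k j) :
    xhat = xstar := by
  have hsub : SubStrongObsW A B C D (Γu ∪ Γustar) (Γy ∩ Γystar) := by
    refine hso _ _ ((Finset.card_union_le _ _).trans (by omega)) ?_
    have := Finset.card_sub_add_le_card_inter (s := Γy) (t := Γystar) (a := s) (b := s)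
      (by rwa [Fintype.card_fin]) (by rwa [Fintype.card_fin])
    rwa [Fintype.card_fin, ← two_mul] at this
  refine hsub.eq_of_outSeq_eq (u := Uhat) (u' := w) (fun t i hi => ?_) (fun k hk j hj => ?_)
  · rw [Finset.mem_union, not_or] at hi
    rw [hUhat t i hi.1, hw t i hi.2]
  · rw [Finset.mem_inter] at hj
    rw [← hmatch k hk j hj.1, hY k, Pi.add_apply, ha k j hj.2, add_zero]
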